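/- arXiv:2506.12451 — 4 statements merged into one kernel-verified Lean document; each statement's English description precedes it below -/
import Mathlib

section
/- For all a, b ∈ ℤ, the polynomial (6aX² + 9bX − 4a²)² − (4a³ − 27b²)(−3X² + 4a) in ℤ[X] is divisible by X³ − aX + b. Consequently, if α is a root of X³ − aX + b in a commutative ring, then (6aα² + 9bα − 4a²)² = (4a³ − 27b²)(−3α² + 4a); in particular, for a cubic field L = ℚ(α) with α a root of the irreducible polynomial X³ − aX + b, the element (6aα² + 9bα − 4a²)/z, where z² = 4a³ − 27b², is a square root of −3α² + 4a. -/
/- Everything is one identity valid in any commutative ring: dividing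
`(6a x² + 9b x − 4a²)² − Δ (−3x² + 4a)` by `x³ − a x + b` leaves the quotient
`36a² x + 108ab` and no remainder. -/

theorem sq_sub_disc_mul_eq_cubic_mul {R : Type*} [CommRing R] (a b x : R) :
    (6 * a * x ^ 2 + 9 * b * x - 4 * a ^ 2) ^ 2 - (4 * a ^ 3 - 27 * b ^ 2) * (-3 * x ^ 2 + 4 * a) =
      (x ^ 3 - a * x + b) * (36 * a ^ 2 * x + 108 * a * b) := by
  ring

theorem sq_eq_disc_mul_of_cubic_root {R : Type*} [CommRing R] {a b α : R}
    (hα : α ^ 3 - a * α + b = 0) :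
    (6 * a * α ^ 2 + 9 * b * α - 4 * a ^ 2) ^ 2 = (4 * a ^ 3 - 27 * b ^ 2) * (-3 * α ^ 2 + 4 * a) := by
  rw [← sub_eq_zero, sq_sub_disc_mul_eq_cubic_mul, hα, zero_mul]

theorem div_sq_eq_of_sq_eq_mul {K : Type*} [Field K] {y d w z : K} (hy : y ^ 2 = d * w)
    (hz : z ^ 2 = d) (hz0 : z ≠ 0) : (y / z) ^ 2 = w := by
  rw [div_pow, hy, hz, mul_div_cancel_left₀ w (hz ▸ pow_ne_zero 2 hz0)]

open Polynomial in
/-- For all `a, b ∈ ℤ`, `X³ − aX + b` divides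
`(6aX² + 9bX − 4a²)² − (4a³ − 27b²)(−3X² + 4a)` in `ℤ[X]`.  Consequently, if `α` is a root
of `X³ − aX + b` in a commutative ring, then
`(6aα² + 9bα − 4a²)² = (4a³ − 27b²)(−3α² + 4a)`; in particular, in a field `K` where
`z² = 4a³ − 27b²` with `z ≠ 0`, the element `(6aα² + 9bα − 4a²)/z` is a square root of
`−3α² + 4a`. -/
theorem cubic_sqrt_discriminant_identity (a b : ℤ) :
    ((X ^ 3 - C a * X + C b : ℤ[X]) ∣
      (C (6 * a) * X ^ 2 + C (9 * b) * X - C (4 * a ^ 2)) ^ 2 -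
        C (4 * a ^ 3 - 27 * b ^ 2) * (C (-3) * X ^ 2 + C (4 * a))) ∧
    (∀ (R : Type) [CommRing R] (α : R), α ^ 3 - (a : R) * α + (b : R) = 0 →
      (6 * (a : R) * α ^ 2 + 9 * (b : R) * α - 4 * (a : R) ^ 2) ^ 2 =
        ((4 * a ^ 3 - 27 * b ^ 2 : ℤ) : R) * (-3 * α ^ 2 + 4 * (a : R))) ∧
    (∀ (K : Type) [Field K] (α z : K), α ^ 3 - (a : K) * α + (b : K) = 0 →
      z ^ 2 = ((4 * a ^ 3 - 27 * b ^ 2 : ℤ) : K) → z ≠ 0 →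
      ((6 * (a : K) * α ^ 2 + 9 * (b : K) * α - 4 * (a : K) ^ 2) / z) ^ 2 =
        -3 * α ^ 2 + 4 * (a : K)) := by
  refine ⟨⟨C (36 * a ^ 2) * X + C (108 * a * b), ?_⟩, fun R _ α hα => ?_, fun K _ α z hα hz hz0 => ?_⟩
  · simp only [map_sub, map_mul, map_pow, map_ofNat, map_neg]
    exact sq_sub_disc_mul_eq_cubic_mul (C a) (C b) X
  · push_cast
    exact sq_eq_disc_mul_of_cubic_root hα
  · push_cast at hz
    exact div_sq_eq_of_sq_eq_mul (sq_eq_disc_mul_of_cubic_root hα) hz hz0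
end

section
/- Let a, b ∈ ℤ with a ≠ 0, and set g₁ = gcd(2a², 6a) and g₂ = gcd(2a, 6). Then there exists a unimodular matrix U ∈ M₉(ℤ) (det U = ±1) such that U · M(a,b) is the 9×3 matrix whose first four rows are (1,0,2), (0,g₁,0), (0,9b,−3), (0,0,g₂) and whose remaining five rows are zero. -/
/-- The `9×3` integer matrix `M(a,b)` built from the action of the Hopf algebra basis
`{w₁, w₂, w₃}` on the basis `{1, α, α²}` of `ℤ[α]`. -/
def cubicActionMatrix (a b : ℤ) : Matrix (Fin 9) (Fin 3) ℤ :=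
  !![1, 0, 2;
     0, 0, 0;
     0, 0, 0;
     0, -4 * a ^ 2, 0;
     1, 9 * b, -1;
     0, 6 * a, 0;
     0, 6 * a * b, 2 * a;
     0, -2 * a ^ 2, 0;
     1, -9 * b, -1]

/-!
Integral row reduction with Bezout blocks. If `x m + y n = g = gcd(m, n)` with `m = p g`, `n = q g`,
then the rows `(x, y)` and `(-q, p)` form a unimodular block sending `(m, n)` to `(g, 0)`. Counting
rows of `M(a,b)` from `0`, such a block merges the middle entries `-2a²`, `6a` of rows 7 and 5 into
`gcd(2a², 6a)`. The combinations `2·row₀ - row₄ - row₈ = (0, 0, 6)` and `row₆ - b·row₅ = (0, 0, 2a)`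
are merged by a second block into `(0, 0, gcd(2a, 6))`; the remaining rows are cleared by elementary
operations. Only the shape of `M(a,b)` matters, so the reduction is done with `2a², 6a, 2a` replaced
by arbitrary `m, n, k`, and an explicit inverse certifies that the determinant is a unit.
-/

theorem Int.exists_isCoprime_mul_gcd (m n : ℤ) :
    ∃ p q : ℤ, IsCoprime p q ∧ m = p * m.gcd n ∧ n = q * m.gcd n := by
  rcases (m.gcd n).eq_zero_or_pos with h | h
  · obtain ⟨rfl, rfl⟩ := Int.gcd_eq_zero_iff.mp h
    exact ⟨1, 0, isCoprime_one_left, by simp, by simp⟩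
  · obtain ⟨p, q, hpq, hm, hn⟩ := Int.exists_gcd_one h
    exact ⟨p, q, Int.isCoprime_iff_gcd_eq_one.mpr hpq, hm, hn⟩

def cubicActionShape (m n k b : ℤ) : Matrix (Fin 9) (Fin 3) ℤ :=
  !![1, 0, 2;
     0, 0, 0;
     0, 0, 0;
     0, -2 * m, 0;
     1, 9 * b, -1;
     0, n, 0;
     0, n * b, k;
     0, -m, 0;
     1, -9 * b, -1]

def reductionMatrix (b x y p q u v s t : ℤ) : Matrix (Fin 9) (Fin 9) ℤ :=
  !![1, 0, 0, 0, 0, 0, 0, 0, 0;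
     0, 0, 0, 0, 0, y, 0, -x, 0;
     -1, 0, 0, 0, 1, 0, 0, 0, 0;
     2 * v, 0, 0, 0, -v, -b * u, u, 0, -v;
     0, 1, 0, 0, 0, 0, 0, 0, 0;
     0, 0, 1, 0, 0, 0, 0, 0, 0;
     0, 0, 0, 1, 0, 0, 0, -2, 0;
     0, 0, 0, 0, 0, p, 0, q, 0;
     -2 * s, 0, 0, 0, s, -b * t, t, 0, s]

def reductionMatrixInv (b x y p q u v s t : ℤ) : Matrix (Fin 9) (Fin 9) ℤ :=
  !![1, 0, 0, 0, 0, 0, 0, 0, 0;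
     0, 0, 0, 0, 1, 0, 0, 0, 0;
     0, 0, 0, 0, 0, 1, 0, 0, 0;
     0, -2 * p, 0, 0, 0, 0, 1, 2 * y, 0;
     1, 0, 1, 0, 0, 0, 0, 0, 0;
     0, q, 0, 0, 0, 0, 0, x, 0;
     0, b * q, 0, s, 0, 0, 0, b * x, v;
     0, -p, 0, 0, 0, 0, 0, y, 0;
     1, 0, -1, -t, 0, 0, 0, 0, u]

def firstReducedForm (g h b : ℤ) : Matrix (Fin 9) (Fin 3) ℤ :=
  !![1, 0, 2;
     0, g, 0;
     0, 9 * b, -3;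
     0, 0, h;
     0, 0, 0;
     0, 0, 0;
     0, 0, 0;
     0, 0, 0;
     0, 0, 0]

theorem reductionMatrix_mul_inv {b x y p q u v s t : ℤ} (hxy : x * p + y * q = 1)
    (huv : u * s + v * t = 1) :
    reductionMatrix b x y p q u v s t * reductionMatrixInv b x y p q u v s t = 1 := by
  ext i j
  fin_cases i <;> fin_cases j <;>
    simp [reductionMatrix, reductionMatrixInv, Matrix.mul_apply, Fin.sum_univ_succ] <;> grind

theorem reductionMatrix_mul_cubicActionShape {b x y p q u v s t g₁ g₂ : ℤ}
    (hxy : x * p + y * q = 1) (huv : u * s + v * t = 1) (h6 : 6 = t * g₂) :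
    reductionMatrix b x y p q u v s t * cubicActionShape (p * g₁) (q * g₁) (s * g₂) b =
      firstReducedForm g₁ g₂ b := by
  ext i j
  fin_cases i <;> fin_cases j <;>
    simp [reductionMatrix, cubicActionShape, firstReducedForm, Matrix.mul_apply,
      Fin.sum_univ_succ] <;> grind

theorem exists_isUnit_det_mul_cubicActionShape (m n k b : ℤ) :
    ∃ U : Matrix (Fin 9) (Fin 9) ℤ,
      IsUnit U.det ∧ U * cubicActionShape m n k b = firstReducedForm (m.gcd n) (k.gcd 6) b := by
  obtain ⟨p, q, ⟨x, y, hxy⟩, hm, hn⟩ := Int.exists_isCoprime_mul_gcd m n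
  obtain ⟨s, t, ⟨u, v, huv⟩, hk, h6⟩ := Int.exists_isCoprime_mul_gcd k 6
  refine ⟨reductionMatrix b x y p q u v s t,
    Matrix.isUnit_det_of_right_inverse (reductionMatrix_mul_inv hxy huv), ?_⟩
  have hU := reductionMatrix_mul_cubicActionShape (b := b) (g₁ := m.gcd n) (g₂ := k.gcd 6) hxy huv h6
  rwa [← hm, ← hn, ← hk] at hU

theorem cubicActionMatrix_eq_cubicActionShape (a b : ℤ) :
    cubicActionMatrix a b = cubicActionShape (2 * a ^ 2) (6 * a) (2 * a) b := by
  ext i j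
  fin_cases i <;> fin_cases j <;> simp [cubicActionMatrix, cubicActionShape]
  ring

theorem cubicActionMatrix_first_reduction_general (a b : ℤ) :
    ∃ U : Matrix (Fin 9) (Fin 9) ℤ,
      (U.det = 1 ∨ U.det = -1) ∧
      U * cubicActionMatrix a b =
        !![1, 0, 2;
           0, (Int.gcd (2 * a ^ 2) (6 * a) : ℤ), 0;
           0, 9 * b, -3;
           0, 0, (Int.gcd (2 * a) 6 : ℤ);
           0, 0, 0;
           0, 0, 0;
           0, 0, 0;
           0, 0, 0;
           0, 0, 0] := by
  obtain ⟨U, hU, hUM⟩ := exists_isUnit_det_mul_cubicActionShape (2 * a ^ 2) (6 * a) (2 * a) b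
  exact ⟨U, Int.isUnit_iff.mp hU, by rw [cubicActionMatrix_eq_cubicActionShape, hUM]; rfl⟩

/-- There is a unimodular `U ∈ M₉(ℤ)` (det `U = ±1`) transforming `M(a,b)` into the `9×3` matrix with
first four rows `(1,0,2), (0,g₁,0), (0,9b,−3), (0,0,g₂)` and remaining rows zero, where
`g₁ = gcd(2a², 6a)` and `g₂ = gcd(2a, 6)`. -/
theorem cubicActionMatrix_first_reduction (a b : ℤ) (ha : a ≠ 0) :
    ∃ U : Matrix (Fin 9) (Fin 9) ℤ,
      (U.det = 1 ∨ U.det = -1) ∧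
      U * cubicActionMatrix a b =
        !![1, 0, 2;
           0, (Int.gcd (2 * a ^ 2) (6 * a) : ℤ), 0;
           0, 9 * b, -3;
           0, 0, (Int.gcd (2 * a) 6 : ℤ);
           0, 0, 0;
           0, 0, 0;
           0, 0, 0;
           0, 0, 0;
           0, 0, 0] :=
  cubicActionMatrix_first_reduction_general a b
end

section
/- Let a, b ∈ ℤ with a ≠ 0 and 3 ∤ a, and set g = gcd(a,b) and Δ = 4a³ − 27b². Then the following are equivalent: (i) there exist β₁, β₂, β₃ ∈ ℤ and r, s ∈ {−1, 1} such that 3β₁ + 2aβ₃ = r and 3aβ₂² − 9bβ₂β₃ + a²β₃² = s·g (equivalently, 3(a/g)β₂² − 9(b/g)β₂β₃ + (a²/g)β₃² = s, all three coefficients being integers); (ii) there exist x, y ∈ ℤ such that x² + 3Δy² = 12ag or x² + 3Δy² = −12ag, such that 6a divides 9by + x or 6a divides 9by − x, and such that 3 ∤ y. -/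
/-! The substitution `x = 6aβ₂ − 9bβ₃`, `y = β₃` turns the binary form of (i) into the norm form
of (ii): `x² + 3Δy² = 12a · (3aβ₂² − 9bβ₂y + a²y²)`, and `6a ∣ 9by + x` says exactly that `x` has
this shape. The linear equation `3β₁ + 2aβ₃ = ±1` is solvable precisely when `3 ∤ 2aβ₃`, i.e.
when `3 ∤ β₃` given `3 ∤ a`. -/

theorem twelve_mul_form_eq (a b β₂ y : ℤ) :
    12 * a * (3 * a * β₂ ^ 2 - 9 * b * β₂ * y + a ^ 2 * y ^ 2) =
      (6 * a * β₂ - 9 * b * y) ^ 2 + 3 * (4 * a ^ 3 - 27 * b ^ 2) * y ^ 2 := by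
  ring

theorem exists_twelve_mul_form_eq_of_dvd {a b x y : ℤ}
    (h : 6 * a ∣ 9 * b * y + x ∨ 6 * a ∣ 9 * b * y - x) :
    ∃ β₂ : ℤ, 12 * a * (3 * a * β₂ ^ 2 - 9 * b * β₂ * y + a ^ 2 * y ^ 2) =
      x ^ 2 + 3 * (4 * a ^ 3 - 27 * b ^ 2) * y ^ 2 := by
  rcases h with ⟨β₂, hβ₂⟩ | ⟨β₂, hβ₂⟩
  · exact ⟨β₂, by rw [twelve_mul_form_eq]; linear_combination (-x + 9 * b * y - 6 * a * β₂) * hβ₂⟩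
  · exact ⟨β₂, by rw [twelve_mul_form_eq]; linear_combination (x + 9 * b * y - 6 * a * β₂) * hβ₂⟩

theorem Int.not_three_dvd_iff_exists_three_mul_add_eq_sign (n : ℤ) :
    ¬ 3 ∣ n ↔ ∃ q r : ℤ, (r = 1 ∨ r = -1) ∧ 3 * q + n = r := by
  constructor
  · intro h
    rcases (by omega : n % 3 = 1 ∨ n % 3 = 2) with h | h
    · exact ⟨(1 - n) / 3, 1, Or.inl rfl, by omega⟩
    · exact ⟨(-1 - n) / 3, -1, Or.inr rfl, by omega⟩
  · rintro ⟨q, r, hr | hr, h⟩ ⟨k, rfl⟩ <;> omega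

/-- Let `a, b ∈ ℤ` with `a ≠ 0` and `3 ∤ a`, and set `g = gcd(a,b)`, `Δ = 4a³ − 27b²`.
The following are equivalent: (i) there exist `β₁, β₂, β₃ ∈ ℤ` and signs `r, s ∈ {−1,1}`
with `3β₁ + 2aβ₃ = r` and `3aβ₂² − 9bβ₂β₃ + a²β₃² = s·g`; (ii) there exist `x, y ∈ ℤ`
with `x² + 3Δy² = ±12ag`, such that `6a ∣ 9by + x` or `6a ∣ 9by − x`, and `3 ∤ y`. -/
theorem freeness_equations_case1 (a b : ℤ) (ha : a ≠ 0) (h3 : ¬(3 : ℤ) ∣ a) :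
    (∃ β₁ β₂ β₃ r s : ℤ, (r = 1 ∨ r = -1) ∧ (s = 1 ∨ s = -1) ∧
        3 * β₁ + 2 * a * β₃ = r ∧
        3 * a * β₂ ^ 2 - 9 * b * β₂ * β₃ + a ^ 2 * β₃ ^ 2 = s * (Int.gcd a b : ℤ)) ↔
    (∃ x y : ℤ,
        (x ^ 2 + 3 * (4 * a ^ 3 - 27 * b ^ 2) * y ^ 2 = 12 * a * (Int.gcd a b : ℤ) ∨
          x ^ 2 + 3 * (4 * a ^ 3 - 27 * b ^ 2) * y ^ 2 = -(12 * a * (Int.gcd a b : ℤ))) ∧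
        (6 * a ∣ 9 * b * y + x ∨ 6 * a ∣ 9 * b * y - x) ∧
        ¬(3 : ℤ) ∣ y) := by
  constructor
  · rintro ⟨β₁, β₂, β₃, r, s, hr, hs, h1, h2⟩
    refine ⟨6 * a * β₂ - 9 * b * β₃, β₃, ?_, Or.inl ⟨β₂, by ring⟩, fun h3β₃ => ?_⟩
    · rw [← twelve_mul_form_eq, h2]
      rcases hs with rfl | rfl
      · exact Or.inl (by ring)
      · exact Or.inr (by ring)
    · exact (Int.not_three_dvd_iff_exists_three_mul_add_eq_sign _).mpr ⟨β₁, r, hr, h1⟩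
        (dvd_mul_of_dvd_right h3β₃ _)
  · rintro ⟨x, y, heq, hdvd, h3y⟩
    obtain ⟨β₂, hβ₂⟩ := exists_twelve_mul_form_eq_of_dvd hdvd
    obtain ⟨β₁, r, hr, h1⟩ := (Int.not_three_dvd_iff_exists_three_mul_add_eq_sign (2 * a * y)).mp
      (Int.prime_three.not_dvd_mul (Int.prime_three.not_dvd_mul (by decide) h3) h3y)
    have h12a : 12 * a ≠ 0 := mul_ne_zero (by norm_num) ha
    rcases heq with heq | heq
    · exact ⟨β₁, β₂, y, r, 1, hr, Or.inl rfl, h1,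
        mul_left_cancel₀ h12a (by linear_combination hβ₂ + heq)⟩
    · exact ⟨β₁, β₂, y, r, -1, hr, Or.inr rfl, h1,
        mul_left_cancel₀ h12a (by linear_combination hβ₂ + heq)⟩
end

section
/- Let a, b ∈ ℤ be nonzero with 3 ∣ a and v₃(a) ≤ v₃(b), and set g = gcd(a,b) and Δ = 4a³ − 27b². Then the following are equivalent: (i) the integral binary quadratic form (a/g)X² − 3(b/g)XY + (a²/(3g))Y² represents 1 or −1, i.e. there exist β₂, β₃ ∈ ℤ and s ∈ {−1, 1} with 3aβ₂² − 9bβ₂β₃ + a²β₃² = 3g·s; (ii) there exist x, y ∈ ℤ such that x² + 3Δy² = 36ag or x² + 3Δy² = −36ag, and such that 6a divides 9by + x or 6a divides 9by − x. -/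
/-!
Completing the square in the form `Q(u, v) = 3a u² − 9b uv + a² v²` gives
`12a · Q(u, v) = (6au − 9bv)² + 3Δv²`. The divisibility condition says precisely that `±x`
has the shape `6au − 9by`, so solutions of the two problems correspond via
`x = 6au − 9bv`, `y = v`, and `12a` cancels because `a ≠ 0`.
-/

theorem twelve_mul_form_eq_sq_add {R : Type*} [CommRing R] (a b u v : R) :
    12 * a * (3 * a * u ^ 2 - 9 * b * u * v + a ^ 2 * v ^ 2) =
      (6 * a * u - 9 * b * v) ^ 2 + 3 * (4 * a ^ 3 - 27 * b ^ 2) * v ^ 2 := by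
  ring

theorem exists_sq_eq_of_dvd_add_or_dvd_sub {R : Type*} [CommRing R] {a b x y : R}
    (h : 6 * a ∣ 9 * b * y + x ∨ 6 * a ∣ 9 * b * y - x) :
    ∃ u, x ^ 2 = (6 * a * u - 9 * b * y) ^ 2 := by
  rcases h with ⟨u, hu⟩ | ⟨u, hu⟩
  · exact ⟨u, by linear_combination (x + 6 * a * u - 9 * b * y) * hu⟩
  · exact ⟨u, by linear_combination (6 * a * u - 9 * b * y - x) * hu⟩

theorem exists_form_eq_of_sq_add_eq {R : Type*} [CommRing R] [IsDomain R] [CharZero R]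
    {a b c x y : R} (ha : a ≠ 0)
    (hxy : x ^ 2 + 3 * (4 * a ^ 3 - 27 * b ^ 2) * y ^ 2 = 12 * a * c)
    (hdvd : 6 * a ∣ 9 * b * y + x ∨ 6 * a ∣ 9 * b * y - x) :
    ∃ u, 3 * a * u ^ 2 - 9 * b * u * y + a ^ 2 * y ^ 2 = c := by
  obtain ⟨u, hu⟩ := exists_sq_eq_of_dvd_add_or_dvd_sub hdvd
  refine ⟨u, mul_left_cancel₀ (mul_ne_zero (by norm_num) ha : 12 * a ≠ 0) ?_⟩
  rw [twelve_mul_form_eq_sq_add, ← hu, hxy]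

theorem freeness_equations_case2_general (a b : ℤ) (ha : a ≠ 0) :
    (∃ β₂ β₃ s : ℤ, (s = 1 ∨ s = -1) ∧
        3 * a * β₂ ^ 2 - 9 * b * β₂ * β₃ + a ^ 2 * β₃ ^ 2 = 3 * (Int.gcd a b : ℤ) * s) ↔
    (∃ x y : ℤ,
        (x ^ 2 + 3 * (4 * a ^ 3 - 27 * b ^ 2) * y ^ 2 = 36 * a * (Int.gcd a b : ℤ) ∨
          x ^ 2 + 3 * (4 * a ^ 3 - 27 * b ^ 2) * y ^ 2 = -(36 * a * (Int.gcd a b : ℤ))) ∧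
        (6 * a ∣ 9 * b * y + x ∨ 6 * a ∣ 9 * b * y - x)) := by
  set g : ℤ := (Int.gcd a b : ℤ)
  constructor
  · rintro ⟨u, v, s, hs, hQ⟩
    have hsq := twelve_mul_form_eq_sq_add a b u v
    refine ⟨6 * a * u - 9 * b * v, v, ?_, Or.inl ⟨u, by ring⟩⟩
    rcases hs with rfl | rfl
    · exact Or.inl (by linear_combination hQ * 12 * a - hsq)
    · exact Or.inr (by linear_combination hQ * 12 * a - hsq)
  · rintro ⟨x, y, hxy | hxy, hdvd⟩
    · obtain ⟨u, hu⟩ := exists_form_eq_of_sq_add_eq (c := 3 * g) ha (by linear_combination hxy) hdvd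
      exact ⟨u, y, 1, Or.inl rfl, by rw [hu, mul_one]⟩
    · obtain ⟨u, hu⟩ := exists_form_eq_of_sq_add_eq (c := -(3 * g)) ha (by linear_combination hxy) hdvd
      exact ⟨u, y, -1, Or.inr rfl, by rw [hu]; ring⟩

/-- Let `a, b ∈ ℤ` be nonzero with `3 ∣ a` and `v₃(a) ≤ v₃(b)`, and set `g = gcd(a,b)`,
`Δ = 4a³ − 27b²`.  The following are equivalent: (i) the quadratic form
`(a/g)X² − 3(b/g)XY + (a²/(3g))Y²` represents `1` or `−1`, i.e. there are `β₂, β₃ ∈ ℤ`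
and `s ∈ {−1,1}` with `3aβ₂² − 9bβ₂β₃ + a²β₃² = 3g·s`; (ii) there exist `x, y ∈ ℤ` with
`x² + 3Δy² = ±36ag` such that `6a ∣ 9by + x` or `6a ∣ 9by − x`. -/
theorem freeness_equations_case2 (a b : ℤ) (ha : a ≠ 0) (hb : b ≠ 0)
    (h3 : (3 : ℤ) ∣ a) (hv : padicValInt 3 a ≤ padicValInt 3 b) :
    (∃ β₂ β₃ s : ℤ, (s = 1 ∨ s = -1) ∧
        3 * a * β₂ ^ 2 - 9 * b * β₂ * β₃ + a ^ 2 * β₃ ^ 2 = 3 * (Int.gcd a b : ℤ) * s) ↔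
    (∃ x y : ℤ,
        (x ^ 2 + 3 * (4 * a ^ 3 - 27 * b ^ 2) * y ^ 2 = 36 * a * (Int.gcd a b : ℤ) ∨
          x ^ 2 + 3 * (4 * a ^ 3 - 27 * b ^ 2) * y ^ 2 = -(36 * a * (Int.gcd a b : ℤ))) ∧
        (6 * a ∣ 9 * b * y + x ∨ 6 * a ∣ 9 * b * y - x)) :=
  freeness_equations_case2_general a b ha
end
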